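/- arXiv:2411.07755 — 2 statements merged into one kernel-verified Lean document; each statement's English description precedes it below -/
import Mathlib

section
/- For every natural number n and every z ∈ ℂ, the Bessel function of the first kind satisfies Bessel's differential equation: z² · J_n''(z) + z · J_n'(z) + (z² − n²) · J_n(z) = 0, where J_n' and J_n'' denote the first and second complex derivatives of J_n. -/
open scoped Real

/-!
With `c k = (-1) ^ k / (k! (k + n)! 2 ^ (2k + n))` we have `J_n z = ∑ c k z ^ (2k + n)`. The Euler
operator `θ = z d/dz` acts on such series term by term as multiplication by the exponent, and
`z² J'' + z J' = θ² J`. Bessel's equation therefore becomes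
`∑ c k ((2k + n)² - n²) z ^ (2k + n) + ∑ c k z ^ (2k + n + 2) = 0`; the first sum has no `k = 0`
term, and after the shift `k ↦ k + 1` the two sums cancel termwise by the recurrence
`c (k + 1) · 4 (k + 1) (k + n + 1) = - c k`.
-/

noncomputable def besselJ (n : ℕ) (z : ℂ) : ℂ :=
  ∑' k : ℕ, ((-1 : ℂ) ^ k / ((Nat.factorial k : ℂ) * (Nat.factorial (k + n) : ℂ))) *
    (z / 2) ^ (2 * k + n)

def InfiniteRadius (c : ℕ → ℂ) (e : ℕ → ℕ) : Prop :=
  ∀ r : ℝ, 0 < r → Summable fun k => ‖c k‖ * r ^ e k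

namespace InfiniteRadius

variable {c : ℕ → ℂ} {e : ℕ → ℕ}

theorem summable (h : InfiniteRadius c e) (z : ℂ) : Summable fun k => c k * z ^ e k :=
  .of_norm_bounded (h (‖z‖ + 1) (by positivity)) fun k => by
    rw [norm_mul, norm_pow]
    gcongr
    linarith

theorem mul_exponent (h : InfiniteRadius c e) : InfiniteRadius (fun k => c k * e k) e := by
  intro r hr
  -- `m * r ^ m ≤ (2 * r) ^ m`
  refine .of_nonneg_of_le (fun k => by positivity) (fun k => ?_) (h (2 * r) (by positivity))
  calc ‖c k * e k‖ * r ^ e k = ‖c k‖ * (e k * r ^ e k) := by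
        rw [norm_mul, Complex.norm_natCast, mul_assoc]
    _ ≤ ‖c k‖ * (2 * r) ^ e k := by
        rw [mul_pow]
        gcongr
        exact_mod_cast (Nat.lt_two_pow_self).le

theorem hasDerivAt (h : InfiniteRadius c e) (z : ℂ) :
    HasDerivAt (fun w => ∑' k, c k * w ^ e k) (∑' k, c k * e k * z ^ (e k - 1)) z := by
  set R := ‖z‖ + 1
  have hR : 1 ≤ R := by simp [R]
  have hR0 : 0 < R := by linarith
  refine hasDerivAt_tsum_of_isPreconnected (g := fun k w => c k * w ^ e k)
    (g' := fun k w => c k * e k * w ^ (e k - 1)) (h.mul_exponent R hR0)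
    Metric.isOpen_ball (convex_ball 0 R).isPreconnected (fun k w _ => ?_) (fun k w hw => ?_)
    (Metric.mem_ball_self hR0) (h.summable 0) (mem_ball_zero_iff.2 (lt_add_one _))
  · simpa [mul_assoc] using (hasDerivAt_pow (e k) w).const_mul (c k)
  · rw [mem_ball_zero_iff] at hw
    rw [norm_mul, norm_pow]
    gcongr
    calc ‖w‖ ^ (e k - 1) ≤ R ^ (e k - 1) := by gcongr
      _ ≤ R ^ e k := pow_le_pow_right₀ hR (Nat.sub_le _ _)

theorem differentiable (h : InfiniteRadius c e) :
    Differentiable ℂ fun w => ∑' k, c k * w ^ e k :=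
  fun z => (h.hasDerivAt z).differentiableAt

theorem mul_deriv (h : InfiniteRadius c e) (z : ℂ) :
    z * deriv (fun w => ∑' k, c k * w ^ e k) z = ∑' k, c k * e k * z ^ e k := by
  rw [(h.hasDerivAt z).deriv, ← tsum_mul_left]
  congr 1 with k
  rcases Nat.eq_zero_or_eq_succ_pred (e k) with he | he
  · simp [he]
  · rw [he, Nat.succ_sub_one, pow_succ]
    ring

end InfiniteRadius

theorem sq_mul_deriv_deriv_add_mul_deriv {f : ℂ → ℂ} (hf : Differentiable ℂ f) (z : ℂ) :
    z ^ 2 * deriv (deriv f) z + z * deriv f z = z * deriv (fun w => w * deriv f w) z := by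
  rw [deriv_fun_mul differentiableAt_fun_id (hf.deriv z), deriv_id'']
  ring

noncomputable def besselCoeff (n k : ℕ) : ℂ :=
  (-1) ^ k / ((k.factorial : ℂ) * ((k + n).factorial : ℂ) * 2 ^ (2 * k + n))

theorem besselJ_eq_tsum (n : ℕ) :
    besselJ n = fun z => ∑' k, besselCoeff n k * z ^ (2 * k + n) := by
  funext z
  refine tsum_congr fun k => ?_
  rw [besselCoeff, div_pow]
  field_simp

theorem besselCoeff_infiniteRadius (n : ℕ) :
    InfiniteRadius (besselCoeff n) fun k => 2 * k + n := by
  intro r hr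
  refine .of_nonneg_of_le (fun k => by positivity) (fun k => ?_)
    ((Real.summable_pow_div_factorial (r ^ 2)).mul_left (r ^ n))
  have hfac : (1 : ℝ) ≤ ((k + n).factorial : ℝ) * 2 ^ (2 * k + n) :=
    one_le_mul_of_one_le_of_one_le (mod_cast (k + n).factorial_pos) (one_le_pow₀ one_le_two)
  calc ‖besselCoeff n k‖ * r ^ (2 * k + n)
      = r ^ n * ((r ^ 2) ^ k / k.factorial) / (((k + n).factorial : ℝ) * 2 ^ (2 * k + n)) := by
        simp only [besselCoeff, Complex.norm_div, norm_pow, norm_neg, norm_one, one_pow,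
          Complex.norm_mul, RCLike.norm_natCast, Complex.norm_ofNat, one_div, mul_inv_rev]
        rw [pow_add, pow_mul]
        ring
    _ ≤ r ^ n * ((r ^ 2) ^ k / k.factorial) := div_le_self (by positivity) hfac

theorem besselCoeff_succ_mul (n k : ℕ) :
    besselCoeff n (k + 1) * (((2 * (k + 1) + n : ℕ) : ℂ) ^ 2 - (n : ℂ) ^ 2) = -besselCoeff n k := by
  have hk : (k + 1 : ℂ) ≠ 0 := by exact_mod_cast k.succ_ne_zero
  have hkn : (k + n + 1 : ℂ) ≠ 0 := by exact_mod_cast (k + n).succ_ne_zero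
  simp only [besselCoeff, Nat.factorial_succ, show k + 1 + n = (k + n) + 1 by ring]
  push_cast
  field_simp
  ring

theorem besselCoeff_tsum_bessel_ode (n : ℕ) (z : ℂ) :
    ∑' k, besselCoeff n k * (2 * k + n : ℕ) * (2 * k + n : ℕ) * z ^ (2 * k + n) +
      (z ^ 2 - (n : ℂ) ^ 2) * ∑' k, besselCoeff n k * z ^ (2 * k + n) = 0 := by
  set e : ℕ → ℕ := fun k => 2 * k + n
  have ha := (besselCoeff_infiniteRadius n).summable z
  have hb := (besselCoeff_infiniteRadius n).mul_exponent.mul_exponent.summable z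
  set t := fun k => besselCoeff n k * ((e k : ℂ) ^ 2 - (n : ℂ) ^ 2) * z ^ e k
  have ht : Summable t := (hb.sub (ha.mul_left ((n : ℂ) ^ 2))).congr fun k => by ring
  have ht0 : t 0 = 0 := by simp [t, e]
  have ht_succ (k : ℕ) : t (k + 1) = -(z ^ 2 * (besselCoeff n k * z ^ e k)) := by
    simp only [t]
    rw [besselCoeff_succ_mul, show e (k + 1) = e k + 2 by ring, pow_add]
    ring
  have ht_tsum : ∑' k, t k = ∑' k, besselCoeff n k * (e k : ℕ) * (e k : ℕ) * z ^ e k -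
      (n : ℂ) ^ 2 * ∑' k, besselCoeff n k * z ^ e k := by
    rw [← tsum_mul_left, ← hb.tsum_sub (ha.mul_left _)]
    exact tsum_congr fun k => by ring
  calc _ = ∑' k, t k + z ^ 2 * ∑' k, besselCoeff n k * z ^ e k := by
        rw [ht_tsum]
        ring
    _ = 0 := by
        rw [ht.tsum_eq_zero_add, ht0, zero_add, tsum_congr ht_succ, tsum_neg, tsum_mul_left]
        ring

/-- `J_n` satisfies Bessel's differential equation on all of `ℂ`. -/
theorem besselJ_satisfies_bessel_ode (n : ℕ) (z : ℂ) :
    z ^ 2 * deriv (deriv (besselJ n)) z + z * deriv (besselJ n) z +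
      (z ^ 2 - (n : ℂ) ^ 2) * besselJ n z = 0 := by
  have hc := besselCoeff_infiniteRadius n
  have hJ := besselJ_eq_tsum n
  have hEuler : (fun w => w * deriv (besselJ n) w) =
      fun w => ∑' k, besselCoeff n k * (2 * k + n : ℕ) * w ^ (2 * k + n) := by
    funext w
    rw [hJ, hc.mul_deriv]
  rw [sq_mul_deriv_deriv_add_mul_deriv (hJ ▸ hc.differentiable), hEuler,
    hc.mul_exponent.mul_deriv, hJ]
  exact besselCoeff_tsum_bessel_ode n z
end

section
/- For every natural number n and every real x > 0, the Bessel function of the second kind satisfies Bessel's differential equation: x² · Y_n''(x) + x · Y_n'(x) + (x² − n²) · Y_n(x) = 0, where Y_n' and Y_n'' denote the first and second derivatives of Y_n on (0,∞). -/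
open scoped Real

/-- Bessel function of the first kind `J_n` restricted to real arguments. -/
noncomputable def besselJR (n : ℕ) (x : ℝ) : ℝ :=
  ∑' k : ℕ, ((-1 : ℝ) ^ k / ((Nat.factorial k : ℝ) * (Nat.factorial (k + n) : ℝ))) *
    (x / 2) ^ (2 * k + n)

/-- The `m`-th harmonic number `H_m = ∑_{j=1}^m 1/j`. -/
noncomputable def harmonicR (m : ℕ) : ℝ := ∑ j ∈ Finset.range m, (1 : ℝ) / (j + 1)

/-- Bessel function of the second kind `Y_n` for real `x > 0`. -/
noncomputable def besselYR (n : ℕ) (x : ℝ) : ℝ :=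
  (2 / Real.pi) * (Real.log (x / 2) + Real.eulerMascheroniConstant) * besselJR n x
  - (1 / Real.pi) * ∑ k ∈ Finset.range n,
      ((Nat.factorial (n - 1 - k) : ℝ) / (Nat.factorial k : ℝ)) * (x / 2) ^ ((2 * k : ℤ) - n)
  - (1 / Real.pi) * ∑' k : ℕ,
      ((-1 : ℝ) ^ k * (harmonicR k + harmonicR (k + n)) /
        ((Nat.factorial k : ℝ) * (Nat.factorial (k + n) : ℝ))) * (x / 2) ^ (2 * k + n)

/-!
Put `t = x / 2` and `θ = t d/dt`. Since `x² f'' + x f' = θ² f`, Bessel's equation for `Y_n` reads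
`(θ² + 4t² - n²) Y = 0` in the variable `t`, and `θ` multiplies `tᵐ` by `m`. On a series
`∑ c_k t^(2k+n)` the operator `θ² + 4t² - n²` therefore yields
`4 ∑ ((k+1)(k+1+n) c_{k+1} + c_k) t^(2k+2+n)`, which vanishes for the coefficients `c_k` of `J_n`.
As `θ (log t) = 1`, the operator sends `log t · J_n` to `2 θJ_n`; by `H_{k+1} = H_k + 1/(k+1)` it
sends the harmonic series to `4 θJ_n - 4 n c_0 tⁿ`; and the finite Laurent part telescopes to
`4 n c_0 tⁿ`. With the weights `2/π`, `-1/π`, `-1/π` of `Y_n` these cancel.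
-/

open Filter Topology

/-- `θ f = g` at `x`, for the Euler operator `θ = x d/dx`. -/
def HasEulerDerivAt (f : ℝ → ℝ) (g x : ℝ) : Prop :=
  HasDerivAt f (x⁻¹ * g) x

namespace HasEulerDerivAt

variable {f g : ℝ → ℝ} {f₁ g₁ x : ℝ}

theorem add (hf : HasEulerDerivAt f f₁ x) (hg : HasEulerDerivAt g g₁ x) :
    HasEulerDerivAt (fun y => f y + g y) (f₁ + g₁) x := by
  unfold HasEulerDerivAt at *
  rw [mul_add]
  exact hf.fun_add hg

theorem sub (hf : HasEulerDerivAt f f₁ x) (hg : HasEulerDerivAt g g₁ x) :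
    HasEulerDerivAt (fun y => f y - g y) (f₁ - g₁) x := by
  unfold HasEulerDerivAt at *
  rw [mul_sub]
  exact hf.fun_sub hg

theorem const_mul (c : ℝ) (hf : HasEulerDerivAt f f₁ x) :
    HasEulerDerivAt (fun y => c * f y) (c * f₁) x := by
  unfold HasEulerDerivAt at *
  rw [mul_left_comm]
  exact HasDerivAt.const_mul c hf

theorem mul (hf : HasEulerDerivAt f f₁ x) (hg : HasEulerDerivAt g g₁ x) :
    HasEulerDerivAt (fun y => f y * g y) (f₁ * g x + f x * g₁) x := by
  unfold HasEulerDerivAt at *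
  exact (hf.fun_mul hg).congr_deriv (by ring)

theorem comp_div_const {a : ℝ} (ha : a ≠ 0) (hf : HasEulerDerivAt f f₁ (x / a)) :
    HasEulerDerivAt (fun y => f (y / a)) f₁ x := by
  unfold HasEulerDerivAt at *
  refine (hf.comp x ((hasDerivAt_id x).div_const a)).congr_deriv ?_
  simp only [inv_div]
  field_simp

theorem sq_mul_deriv_deriv_add (hx : x ≠ 0) (hf : ∀ᶠ y in 𝓝 x, HasEulerDerivAt f (g y) y)
    (hg : HasEulerDerivAt g g₁ x) :
    x ^ 2 * deriv (deriv f) x + x * deriv f x = g₁ := by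
  have hderiv : deriv f =ᶠ[𝓝 x] fun y => y⁻¹ * g y := hf.mono fun y hy => hy.deriv
  have hderiv₂ : deriv (deriv f) x = -(x ^ 2)⁻¹ * g x + x⁻¹ * (x⁻¹ * g₁) := by
    rw [hderiv.deriv_eq]
    exact ((hasDerivAt_inv hx).mul hg).deriv
  rw [hderiv₂, hderiv.eq_of_nhds]
  field_simp
  ring

end HasEulerDerivAt

theorem hasEulerDerivAt_zpow (m : ℤ) {x : ℝ} (hx : x ≠ 0) :
    HasEulerDerivAt (fun y => y ^ m) (m * x ^ m) x := by
  unfold HasEulerDerivAt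
  refine (hasDerivAt_zpow m x (Or.inl hx)).congr_deriv ?_
  rw [zpow_sub_one₀ hx]
  ring

theorem hasEulerDerivAt_log_add (c : ℝ) {x : ℝ} (hx : x ≠ 0) :
    HasEulerDerivAt (fun y => Real.log y + c) 1 x := by
  simpa [HasEulerDerivAt] using (Real.hasDerivAt_log hx).add_const c

def IsEntireSeries (c : ℕ → ℝ) (m : ℕ → ℕ) : Prop :=
  ∀ R : ℝ, 0 ≤ R → Summable fun k => |c k| * R ^ m k

noncomputable def monomialSeries (c : ℕ → ℝ) (m : ℕ → ℕ) (x : ℝ) : ℝ :=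
  ∑' k, c k * x ^ m k

namespace IsEntireSeries

variable {c d : ℕ → ℝ} {m : ℕ → ℕ}

theorem summable (h : IsEntireSeries c m) (x : ℝ) : Summable fun k => c k * x ^ m k :=
  .of_norm <| (h |x| (abs_nonneg x)).congr fun k => by
    rw [Real.norm_eq_abs, abs_mul, abs_pow]

theorem of_abs_le (h : IsEntireSeries c m) (hdc : ∀ k, |d k| ≤ |c k|) :
    IsEntireSeries d m := fun R hR =>
  (h R hR).of_nonneg_of_le (fun k => by positivity) fun k =>
    mul_le_mul_of_nonneg_right (hdc k) (by positivity)

theorem mul_exponent (h : IsEntireSeries c m) : IsEntireSeries (fun k => c k * m k) m := by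
  intro R hR
  refine (h (2 * R) (by positivity)).of_nonneg_of_le (fun k => by positivity) fun k => ?_
  have hm : (m k : ℝ) ≤ 2 ^ m k := by exact_mod_cast (Nat.lt_two_pow_self).le
  calc |c k * m k| * R ^ m k = |c k| * (m k * R ^ m k) := by rw [abs_mul, Nat.abs_cast]; ring
    _ ≤ |c k| * (2 ^ m k * R ^ m k) := by gcongr
    _ = |c k| * (2 * R) ^ m k := by rw [mul_pow]

theorem mul_exponent_pow (h : IsEntireSeries c m) (j : ℕ) :
    IsEntireSeries (fun k => c k * (m k : ℝ) ^ j) m := by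
  induction j with
  | zero => simpa using h
  | succ j ih => simpa only [pow_succ, mul_assoc] using ih.mul_exponent

theorem hasDerivAt (h : IsEntireSeries c m) (x : ℝ) :
    HasDerivAt (monomialSeries c m) (∑' k, c k * m k * x ^ (m k - 1)) x := by
  set r := |x| + 1 with hr_def
  have hr : 1 ≤ r := le_add_of_nonneg_left (abs_nonneg x)
  have hx : x ∈ Metric.ball (0 : ℝ) r := by
    rw [Metric.mem_ball, Real.dist_eq, sub_zero, hr_def]; exact lt_add_one _
  refine hasDerivAt_tsum_of_isPreconnected (u := fun k => |c k * m k| * r ^ m k)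
    (g := fun k y => c k * y ^ m k) (g' := fun k y => c k * m k * y ^ (m k - 1))
    (h.mul_exponent r (by positivity)) Metric.isOpen_ball (convex_ball 0 r).isPreconnected
    (fun k y _ => ?_) (fun k y hy => ?_) hx (h.summable x) hx
  · simpa only [mul_assoc] using (hasDerivAt_pow (m k) y).const_mul (c k)
  · have hy : |y| ≤ r := by simpa using (Metric.mem_ball.mp hy).le
    rw [Real.norm_eq_abs, abs_mul, abs_pow]
    gcongr
    exact (pow_le_pow_left₀ (abs_nonneg y) hy _).trans (pow_le_pow_right₀ hr (Nat.sub_le _ _))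

theorem hasEulerDerivAt (h : IsEntireSeries c m) {x : ℝ} (hx : x ≠ 0) :
    HasEulerDerivAt (monomialSeries c m) (monomialSeries (fun k => c k * m k) m x) x := by
  refine (h.hasDerivAt x).congr_deriv ?_
  rw [monomialSeries, ← tsum_mul_left]
  refine tsum_congr fun k => ?_
  rcases Nat.eq_zero_or_pos (m k) with hk | hk
  · simp [hk]
  · rw [← Nat.sub_add_cancel hk, pow_succ]
    field_simp
    push_cast
    ring

end IsEntireSeries

theorem monomialSeries_bessel {n : ℕ} {c : ℕ → ℝ} (h : IsEntireSeries c fun k => 2 * k + n)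
    (t : ℝ) :
    monomialSeries (fun k => c k * ((2 * k + n : ℕ) : ℝ) ^ 2) (fun k => 2 * k + n) t
        + (4 * t ^ 2 - n ^ 2) * monomialSeries c (fun k => 2 * k + n) t
      = 4 * ∑' k, ((k + 1) * (k + 1 + n) * c (k + 1) + c k) * t ^ (2 * (k + 1) + n) := by
  set u : ℕ → ℝ := fun k => k * (k + n) * c k * t ^ (2 * k + n)
  set v : ℕ → ℝ := fun k => c k * t ^ (2 * (k + 1) + n)
  have hv : Summable v := ((h.summable t).mul_left (t ^ 2)).congr fun k => by simp only [v]; ring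
  have hu : Summable u := by
    refine (((h.mul_exponent_pow 2).summable t).sub
      ((h.summable t).mul_left ((n : ℝ) ^ 2))).div_const 4 |>.congr fun k => ?_
    simp only [u]; push_cast; ring
  calc _ = ∑' k, (4 * u k + 4 * v k) := by
        rw [monomialSeries, monomialSeries, ← tsum_mul_left,
          ← ((h.mul_exponent_pow 2).summable t).tsum_add ((h.summable t).mul_left _)]
        exact tsum_congr fun k => by simp only [u, v]; push_cast; ring
    _ = 4 * ∑' k, (u (k + 1) + v k) := by
        have hu₀ : u 0 = 0 := by simp [u]
        rw [(hu.mul_left 4).tsum_add (hv.mul_left 4), ((summable_nat_add_iff 1).mpr hu).tsum_add hv,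
          tsum_mul_left, tsum_mul_left, hu.tsum_eq_zero_add, hu₀]
        ring
    _ = _ := by
        congr 1
        exact tsum_congr fun k => by simp only [u, v]; push_cast; ring

noncomputable def zpowSum (N : ℕ) (b : ℕ → ℝ) (z : ℕ → ℤ) (x : ℝ) : ℝ :=
  ∑ k ∈ Finset.range N, b k * x ^ z k

theorem hasEulerDerivAt_zpowSum (N : ℕ) (b : ℕ → ℝ) (z : ℕ → ℤ) {x : ℝ} (hx : x ≠ 0) :
    HasEulerDerivAt (zpowSum N b z) (zpowSum N (fun k => b k * z k) z x) x := by
  unfold HasEulerDerivAt zpowSum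
  rw [Finset.mul_sum]
  refine HasDerivAt.fun_sum fun k _ => ?_
  refine ((hasEulerDerivAt_zpow (z k) hx).const_mul (b k)).congr_deriv ?_
  ring

theorem zpowSum_bessel (n N : ℕ) (b : ℕ → ℝ) {t : ℝ} (ht : t ≠ 0) :
    zpowSum (N + 1) (fun k => b k * ((2 * k - n : ℤ) : ℝ) ^ 2) (fun k => 2 * k - n) t
        + (4 * t ^ 2 - n ^ 2) * zpowSum (N + 1) b (fun k => 2 * k - n) t
      = 4 * ∑ k ∈ Finset.range N,
            ((k + 1) * (k + 1 - n) * b (k + 1) + b k) * t ^ (2 * (k + 1 : ℤ) - n)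
        + 4 * b N * t ^ (2 * (N + 1 : ℤ) - n) := by
  set u : ℕ → ℝ := fun k => k * (k - n) * b k * t ^ (2 * (k : ℤ) - n)
  set v : ℕ → ℝ := fun k => b k * t ^ (2 * (k + 1 : ℤ) - n)
  calc _ = ∑ k ∈ Finset.range (N + 1), (4 * u k + 4 * v k) := by
        rw [zpowSum, zpowSum, Finset.mul_sum, ← Finset.sum_add_distrib]
        refine Finset.sum_congr rfl fun k _ => ?_
        have hshift : t ^ (2 * (k + 1 : ℤ) - n) = t ^ (2 * (k : ℤ) - n) * t ^ 2 := by
          rw [← zpow_natCast, ← zpow_add₀ ht]; push_cast; ring_nf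
        simp only [u, v, hshift]
        push_cast
        ring
    _ = _ := by
        have hpair : ∑ k ∈ Finset.range N,
            ((k + 1) * (k + 1 - n) * b (k + 1) + b k) * t ^ (2 * (k + 1 : ℤ) - n)
              = ∑ k ∈ Finset.range N, (u (k + 1) + v k) :=
          Finset.sum_congr rfl fun k _ => by simp only [u, v]; push_cast; ring
        have hu₀ : u 0 = 0 := by simp [u]
        rw [Finset.sum_add_distrib, ← Finset.mul_sum, ← Finset.mul_sum, Finset.sum_range_succ' u,
          Finset.sum_range_succ v, hpair, Finset.sum_add_distrib, hu₀]
        ring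

theorem harmonicR_succ (m : ℕ) : harmonicR (m + 1) = harmonicR m + 1 / (m + 1) := by
  rw [harmonicR, Finset.sum_range_succ, harmonicR]

theorem harmonicR_nonneg (m : ℕ) : 0 ≤ harmonicR m :=
  Finset.sum_nonneg fun j _ => by positivity

theorem harmonicR_le (m : ℕ) : harmonicR m ≤ m := by
  calc harmonicR m ≤ ∑ _j ∈ Finset.range m, (1 : ℝ) :=
        Finset.sum_le_sum fun j _ => by
          rw [div_le_one (by positivity)]; linarith [j.cast_nonneg (α := ℝ)]
    _ = m := by simp

section BesselCoefficients

variable (n : ℕ)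

noncomputable def besselJCoeff (k : ℕ) : ℝ :=
  (-1 : ℝ) ^ k / ((Nat.factorial k : ℝ) * (Nat.factorial (k + n) : ℝ))

noncomputable def besselYCoeff (k : ℕ) : ℝ :=
  (-1 : ℝ) ^ k * (harmonicR k + harmonicR (k + n)) /
    ((Nat.factorial k : ℝ) * (Nat.factorial (k + n) : ℝ))

noncomputable def besselYLaurentCoeff (k : ℕ) : ℝ :=
  (Nat.factorial (n - 1 - k) : ℝ) / (Nat.factorial k : ℝ)

theorem besselJCoeff_succ (k : ℕ) :
    (k + 1) * (k + 1 + n) * besselJCoeff n (k + 1) + besselJCoeff n k = 0 := by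
  rw [besselJCoeff, besselJCoeff, show k + 1 + n = k + n + 1 by ring, Nat.factorial_succ,
    Nat.factorial_succ, pow_succ]
  push_cast
  field_simp
  ring

theorem besselYCoeff_eq (k : ℕ) :
    besselYCoeff n k = besselJCoeff n k * (harmonicR k + harmonicR (k + n)) := by
  rw [besselYCoeff, besselJCoeff, mul_div_right_comm]

theorem besselYCoeff_succ (k : ℕ) :
    (k + 1) * (k + 1 + n) * besselYCoeff n (k + 1) + besselYCoeff n k
      = (2 * (k + 1) + n) * besselJCoeff n (k + 1) := by
  have hJ := besselJCoeff_succ n k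
  rw [besselYCoeff_eq, besselYCoeff_eq, show k + 1 + n = k + n + 1 by ring, harmonicR_succ,
    harmonicR_succ]
  have hk₁ : ((k : ℝ) + 1) * (1 / (k + 1)) = 1 := mul_one_div_cancel (by positivity)
  have hk₂ : ((k + n : ℕ) + 1 : ℝ) * (1 / ((k + n : ℕ) + 1)) = 1 :=
    mul_one_div_cancel (by positivity)
  push_cast at hk₂ ⊢
  linear_combination (harmonicR k + harmonicR (k + n)) * hJ
    + (k + 1 + n) * besselJCoeff n (k + 1) * hk₁ + (k + 1) * besselJCoeff n (k + 1) * hk₂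

theorem abs_besselJCoeff_le (k : ℕ) : |besselJCoeff n k| ≤ 1 / Nat.factorial k := by
  rw [besselJCoeff, abs_div, abs_pow, abs_neg, abs_one, one_pow, abs_of_pos (by positivity)]
  gcongr
  exact le_mul_of_one_le_right (by positivity) (by exact_mod_cast (k + n).factorial_pos)

theorem isEntireSeries_besselJCoeff : IsEntireSeries (besselJCoeff n) fun k => 2 * k + n := by
  intro R hR
  refine ((Real.summable_pow_div_factorial (R ^ 2)).mul_left (R ^ n)).of_nonneg_of_le
    (fun k => by positivity) fun k => ?_
  calc |besselJCoeff n k| * R ^ (2 * k + n) ≤ 1 / Nat.factorial k * R ^ (2 * k + n) := by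
        gcongr; exact abs_besselJCoeff_le n k
    _ = R ^ n * ((R ^ 2) ^ k / Nat.factorial k) := by ring

theorem isEntireSeries_besselYCoeff : IsEntireSeries (besselYCoeff n) fun k => 2 * k + n := by
  refine (isEntireSeries_besselJCoeff n).mul_exponent.of_abs_le fun k => ?_
  have hH : harmonicR k + harmonicR (k + n) ≤ ((2 * k + n : ℕ) : ℝ) := by
    have := harmonicR_le k; have := harmonicR_le (k + n); push_cast at *; linarith
  rw [besselYCoeff_eq, abs_mul, abs_mul, Nat.abs_cast,
    abs_of_nonneg (add_nonneg (harmonicR_nonneg _) (harmonicR_nonneg _))]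
  gcongr

theorem besselYLaurentCoeff_succ {k : ℕ} (hk : k + 1 < n) :
    (k + 1) * (k + 1 - n) * besselYLaurentCoeff n (k + 1) + besselYLaurentCoeff n k = 0 := by
  obtain ⟨j, rfl⟩ : ∃ j, n = k + 2 + j := ⟨n - k - 2, by omega⟩
  rw [besselYLaurentCoeff, besselYLaurentCoeff, show k + 2 + j - 1 - k = j + 1 by omega,
    show k + 2 + j - 1 - (k + 1) = j by omega, Nat.factorial_succ, Nat.factorial_succ]
  push_cast
  field_simp
  ring

theorem besselYLaurentCoeff_last (N : ℕ) :
    besselYLaurentCoeff (N + 1) N = (N + 1) * besselJCoeff (N + 1) 0 := by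
  rw [besselYLaurentCoeff, besselJCoeff, Nat.add_sub_cancel, Nat.sub_self, zero_add,
    Nat.factorial_succ]
  push_cast
  field_simp
  simp

end BesselCoefficients

section BesselEuler

variable (n : ℕ)

/-! With `θ = t d/dt`, `besselJEuler n j`, `besselYSeriesEuler n j` and `besselYLaurentEuler n j`
are `θʲ` of the three series making up `Y_n (2 t)`, and `besselYEuler n j` is `θʲ (t ↦ Y_n (2 t))`,
the term `j θʲ⁻¹ J` coming from `θ (log t) = 1`. -/

noncomputable def besselJEuler (j : ℕ) : ℝ → ℝ :=
  monomialSeries (fun k => besselJCoeff n k * ((2 * k + n : ℕ) : ℝ) ^ j) fun k => 2 * k + n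

noncomputable def besselYSeriesEuler (j : ℕ) : ℝ → ℝ :=
  monomialSeries (fun k => besselYCoeff n k * ((2 * k + n : ℕ) : ℝ) ^ j) fun k => 2 * k + n

noncomputable def besselYLaurentEuler (j : ℕ) : ℝ → ℝ :=
  zpowSum n (fun k => besselYLaurentCoeff n k * ((2 * k - n : ℤ) : ℝ) ^ j) fun k => 2 * k - n

noncomputable def besselYEuler (j : ℕ) (t : ℝ) : ℝ :=
  2 / π * ((Real.log t + Real.eulerMascheroniConstant) * besselJEuler n j t
      + j * besselJEuler n (j - 1) t)
    - 1 / π * besselYLaurentEuler n j t - 1 / π * besselYSeriesEuler n j t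

theorem besselYR_eq_besselYEuler (x : ℝ) : besselYR n x = besselYEuler n 0 (x / 2) := by
  simp only [besselYR, besselYEuler, besselJR, besselJEuler, besselYSeriesEuler,
    besselYLaurentEuler, monomialSeries, zpowSum, besselJCoeff, besselYCoeff, besselYLaurentCoeff,
    pow_zero, mul_one, Nat.cast_zero, zero_mul, add_zero]
  ring

variable {n}

theorem hasEulerDerivAt_besselJEuler (j : ℕ) {t : ℝ} (ht : t ≠ 0) :
    HasEulerDerivAt (besselJEuler n j) (besselJEuler n (j + 1) t) t := by
  simpa only [besselJEuler, pow_succ, mul_assoc] using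
    ((isEntireSeries_besselJCoeff n).mul_exponent_pow j).hasEulerDerivAt ht

theorem hasEulerDerivAt_besselYSeriesEuler (j : ℕ) {t : ℝ} (ht : t ≠ 0) :
    HasEulerDerivAt (besselYSeriesEuler n j) (besselYSeriesEuler n (j + 1) t) t := by
  simpa only [besselYSeriesEuler, pow_succ, mul_assoc] using
    ((isEntireSeries_besselYCoeff n).mul_exponent_pow j).hasEulerDerivAt ht

theorem hasEulerDerivAt_besselYLaurentEuler (j : ℕ) {t : ℝ} (ht : t ≠ 0) :
    HasEulerDerivAt (besselYLaurentEuler n j) (besselYLaurentEuler n (j + 1) t) t := by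
  simpa only [besselYLaurentEuler, pow_succ, mul_assoc] using
    hasEulerDerivAt_zpowSum n (fun k => besselYLaurentCoeff n k * ((2 * k - n : ℤ) : ℝ) ^ j) _ ht

theorem hasEulerDerivAt_besselYEuler (j : ℕ) {t : ℝ} (ht : 0 < t) :
    HasEulerDerivAt (besselYEuler n j) (besselYEuler n (j + 1) t) t := by
  have hlog := hasEulerDerivAt_log_add Real.eulerMascheroniConstant ht.ne'
  have hJ := hasEulerDerivAt_besselJEuler (n := n) j ht.ne'
  have hJ' := (hasEulerDerivAt_besselJEuler (n := n) (j - 1) ht.ne').const_mul (j : ℝ)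
  have := (((hlog.mul hJ).add hJ').const_mul (2 / π)).sub
    ((hasEulerDerivAt_besselYLaurentEuler (n := n) j ht.ne').const_mul (1 / π)) |>.sub
    ((hasEulerDerivAt_besselYSeriesEuler (n := n) j ht.ne').const_mul (1 / π))
  refine HasDerivAt.congr_deriv this (congrArg _ ?_)
  rcases j with _ | j
  · simp only [besselYEuler, Nat.cast_zero, zero_mul, add_zero]
    ring
  · simp only [besselYEuler, Nat.add_sub_cancel]
    push_cast
    ring

theorem besselJEuler_bessel (t : ℝ) :
    besselJEuler n 2 t + (4 * t ^ 2 - n ^ 2) * besselJEuler n 0 t = 0 := by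
  have := monomialSeries_bessel (isEntireSeries_besselJCoeff n) t
  simp only [besselJCoeff_succ, zero_mul, tsum_zero, mul_zero] at this
  simpa [besselJEuler] using this

theorem besselYSeriesEuler_bessel (t : ℝ) :
    besselYSeriesEuler n 2 t + (4 * t ^ 2 - n ^ 2) * besselYSeriesEuler n 0 t
      = 4 * (besselJEuler n 1 t - n * besselJCoeff n 0 * t ^ n) := by
  have hJ₁ : besselJEuler n 1 t = n * besselJCoeff n 0 * t ^ n
      + ∑' k, (2 * (k + 1) + n) * besselJCoeff n (k + 1) * t ^ (2 * (k + 1) + n) := by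
    rw [besselJEuler, monomialSeries,
      (((isEntireSeries_besselJCoeff n).mul_exponent_pow 1).summable t).tsum_eq_zero_add]
    congr 1
    · push_cast; ring
    · exact tsum_congr fun k => by push_cast; ring
  have := monomialSeries_bessel (isEntireSeries_besselYCoeff n) t
  simp only [besselYCoeff_succ] at this
  simp only [besselYSeriesEuler, pow_zero, mul_one, this, hJ₁]
  ring

theorem besselYLaurentEuler_bessel {t : ℝ} (ht : t ≠ 0) :
    besselYLaurentEuler n 2 t + (4 * t ^ 2 - n ^ 2) * besselYLaurentEuler n 0 t
      = 4 * n * besselJCoeff n 0 * t ^ n := by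
  rcases n with _ | N
  · simp [besselYLaurentEuler, zpowSum]
  have hsum := zpowSum_bessel (N + 1) N (besselYLaurentCoeff (N + 1)) ht
  rw [Finset.sum_eq_zero fun k hk => by
    rw [besselYLaurentCoeff_succ (N + 1) (by simpa using hk), zero_mul]] at hsum
  have hexp : 2 * ((N : ℤ) + 1) - ((N + 1 : ℕ) : ℤ) = ((N + 1 : ℕ) : ℤ) := by push_cast; ring
  simp only [besselYLaurentEuler, pow_zero, mul_one, hsum, besselYLaurentCoeff_last, hexp,
    zpow_natCast]
  push_cast
  ring

theorem besselYEuler_bessel {t : ℝ} (ht : t ≠ 0) :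
    besselYEuler n 2 t + (4 * t ^ 2 - n ^ 2) * besselYEuler n 0 t = 0 := by
  simp only [besselYEuler, Nat.cast_ofNat, Nat.cast_zero, zero_mul, add_zero]
  linear_combination (2 / π * (Real.log t + Real.eulerMascheroniConstant)) * besselJEuler_bessel t
    - 1 / π * besselYLaurentEuler_bessel ht - 1 / π * besselYSeriesEuler_bessel t

end BesselEuler

/-- `Y_n` satisfies Bessel's differential equation on `(0, ∞)`. -/
theorem besselYR_satisfies_bessel_ode (n : ℕ) (x : ℝ) (hx : 0 < x) :
    x ^ 2 * deriv (deriv (besselYR n)) x + x * deriv (besselYR n) x +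
      (x ^ 2 - (n : ℝ) ^ 2) * besselYR n x = 0 := by
  have hθ (j : ℕ) (y : ℝ) (hy : 0 < y) :
      HasEulerDerivAt (fun y => besselYEuler n j (y / 2)) (besselYEuler n (j + 1) (y / 2)) y :=
    (hasEulerDerivAt_besselYEuler j (half_pos hy)).comp_div_const two_ne_zero
  rw [funext (besselYR_eq_besselYEuler n), HasEulerDerivAt.sq_mul_deriv_deriv_add hx.ne'
    ((eventually_gt_nhds hx).mono (hθ 0)) (hθ 1 x hx)]
  linear_combination besselYEuler_bessel (n := n) (half_pos hx).ne'
end
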